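/- Let n ≥ 2, m ≥ 1, let φ be an endomorphism of F_n, Q an m×m integer matrix, P an n×m integer matrix, and let Ψ = Ψ_{φ,Q,P} be the endomorphism of F_n × Z^m sending u t^a to φ(u) t^{aQ+uP}. If d = det(I_m − Q) ≠ 0, then the subgroup K = {u ∈ Fix φ | there exists a ∈ Z^m with a = aQ + uP} has finite index in Fix φ, with [Fix φ : K] ≤ |d|^k where k = rk(Fix φ); consequently Fix Ψ ≅ K is a free group of finite rank. -/

import Mathlib

/-- The fixed subgroup of an endomorphism `φ` of a group `G`. -/
def fixedSubgroup {G : Type*} [Group G] (φ : G →* G) : Subgroup G where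
  carrier := {x | φ x = x}
  one_mem' := by simp
  mul_mem' := by
    intro a b ha hb
    simp only [Set.mem_setOf_eq, map_mul] at *
    rw [ha, hb]
  inv_mem' := by
    intro a ha
    simp only [Set.mem_setOf_eq, map_inv] at *
    rw [ha]

/-- A subgroup `H` of `G` is end-fixed up to isomorphism if `H ≅ Fix φ`
for some endomorphism `φ` of `G`. -/
def IsEndFixed {G : Type*} [Group G] (H : Subgroup G) : Prop :=
  ∃ φ : G →* G, Nonempty (H ≃* fixedSubgroup φ)

/-- A subgroup `H` of `G` is aut-fixed up to isomorphism if `H ≅ Fix φ`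
for some automorphism `φ` of `G`. -/
def IsAutFixed {G : Type*} [Group G] (H : Subgroup G) : Prop :=
  ∃ φ : G ≃* G, Nonempty (H ≃* fixedSubgroup φ.toMonoidHom)

/-- The free abelian group `ℤ^m` of rank `m`, written multiplicatively. -/
abbrev ZPowFreeAb (m : ℕ) := Multiplicative (Fin m → ℤ)

/-- The abelianization homomorphism of the free group `F_n`, with values in `ℤ^n`. -/
def freeAb (n : ℕ) : FreeGroup (Fin n) →* Multiplicative (Fin n → ℤ) :=
  FreeGroup.lift fun i => Multiplicative.ofAdd (Pi.single i 1)

/-- The abelianization vector (vector of exponent sums) of a word `u ∈ F_n`. -/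
def freeVec {n : ℕ} (u : FreeGroup (Fin n)) : Fin n → ℤ :=
  Multiplicative.toAdd (freeAb n u)

lemma freeVec_one {n : ℕ} : freeVec (1 : FreeGroup (Fin n)) = 0 := by
  simp [freeVec]

lemma freeVec_mul {n : ℕ} (u v : FreeGroup (Fin n)) :
    freeVec (u * v) = freeVec u + freeVec v := by
  simp [freeVec, map_mul]

lemma freeVec_inv {n : ℕ} (u : FreeGroup (Fin n)) : freeVec u⁻¹ = -freeVec u := by
  simp [freeVec, map_inv]

/-- The subgroup `K = {u ∈ Fix φ | ∃ a ∈ ℤ^m, a = aQ + uP}` of `F_n`. -/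
def Kgrp (n m : ℕ) (φ : FreeGroup (Fin n) →* FreeGroup (Fin n))
    (Q : Matrix (Fin m) (Fin m) ℤ) (P : Matrix (Fin n) (Fin m) ℤ) :
    Subgroup (FreeGroup (Fin n)) where
  carrier := {u | φ u = u ∧
    ∃ a : Fin m → ℤ, a = Matrix.vecMul a Q + Matrix.vecMul (freeVec u) P}
  one_mem' := ⟨map_one φ, 0, by simp [freeVec_one, Matrix.zero_vecMul]⟩
  mul_mem' := by
    rintro u v ⟨hu, au, hau⟩ ⟨hv, av, hav⟩
    refine ⟨by rw [map_mul, hu, hv], au + av, ?_⟩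
    conv_lhs => rw [hau, hav]
    rw [freeVec_mul, Matrix.add_vecMul, Matrix.add_vecMul]
    abel
  inv_mem' := by
    rintro u ⟨hu, au, hau⟩
    refine ⟨by rw [map_inv, hu], -au, ?_⟩
    conv_lhs => rw [hau]
    rw [freeVec_inv, Matrix.neg_vecMul, Matrix.neg_vecMul]
    abel

/-- The subgroup `A = {a ∈ ℤ^m | a = aQ}` of `ℤ^m`. -/
def Agrp (m : ℕ) (Q : Matrix (Fin m) (Fin m) ℤ) : Subgroup (ZPowFreeAb m) where
  carrier := {a | Multiplicative.toAdd a = Matrix.vecMul (Multiplicative.toAdd a) Q}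
  one_mem' := by simp [Matrix.zero_vecMul]
  mul_mem' := by
    intro a b ha hb
    simp only [Set.mem_setOf_eq, toAdd_mul] at *
    rw [Matrix.add_vecMul, ← ha, ← hb]
  inv_mem' := by
    intro a ha
    simp only [Set.mem_setOf_eq, toAdd_inv] at *
    rw [Matrix.neg_vecMul, ← ha]


/-!
A word `u ∈ Fix φ` lies in `K` exactly when `uP` lies in the image of `a ↦ a(1 - Q)`, so
`K` is the kernel of `u ↦ [uP]` from `Fix φ` to `coker(1 - Q)`. The adjugate shows that `d`
kills this cokernel, so the image of the `k`-generated group `Fix φ` is a quotient of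
`(ℤ/|d|)^k`, which bounds the index by `|d|^k`. A finite-index subgroup of a free group of
finite rank is finitely generated, and free by Nielsen–Schreier. Since `1 - Q` is injective,
a fixed point `(u, a)` of `Ψ` is determined by `u`, so projecting gives `Fix Ψ ≅ K`.
-/

theorem Matrix.det_smul_mem_range_vecMulLinear {R ι : Type*} [CommRing R] [Fintype ι]
    [DecidableEq ι] (M : Matrix ι ι R) (x : ι → R) :
    M.det • x ∈ LinearMap.range M.vecMulLinear :=
  ⟨Matrix.vecMul x M.adjugate, by
    rw [Matrix.vecMulLinear_apply, Matrix.vecMul_vecMul, Matrix.adjugate_mul,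
      Matrix.vecMul_smul, Matrix.vecMul_one]⟩

theorem IsFreeGroup.finite_generators {G : Type*} [Group G] [IsFreeGroup G] [Group.FG G] :
    Finite (IsFreeGroup.Generators G) := by
  have : Group.FG (Abelianization (FreeGroup (IsFreeGroup.Generators G))) :=
    Group.fg_of_surjective (f := Abelianization.of.comp (IsFreeGroup.toFreeGroup G).toMonoidHom)
      (QuotientGroup.mk_surjective.comp (IsFreeGroup.toFreeGroup G).surjective)
  have : Module.Finite ℤ (FreeAbelianGroup (IsFreeGroup.Generators G)) :=
    Module.Finite.iff_addGroup_fg.2 (AddGroup.fg_iff_mul_fg.2 this)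
  exact Module.Finite.finite_basis (FreeAbelianGroup.basis _)

theorem IsFreeGroup.exists_mulEquiv_freeGroup_fin (G : Type*) [Group G] [IsFreeGroup G]
    [Group.FG G] : ∃ r : ℕ, Nonempty (G ≃* FreeGroup (Fin r)) := by
  have := IsFreeGroup.finite_generators (G := G)
  have := Fintype.ofFinite (IsFreeGroup.Generators G)
  exact ⟨_, ⟨(IsFreeGroup.toFreeGroup G).trans
    (FreeGroup.freeGroupCongr (Fintype.equivFin _))⟩⟩

theorem Subgroup.exists_mulEquiv_freeGroup_fin_of_index_ne_zero {G : Type*} [Group G] {k : ℕ}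
    (e : G ≃* FreeGroup (Fin k)) {H : Subgroup G} (hH : H.index ≠ 0) :
    ∃ r : ℕ, Nonempty (H ≃* FreeGroup (Fin r)) := by
  have : (H.map e.toMonoidHom).FiniteIndex :=
    ⟨by rwa [Subgroup.index_map_of_bijective e.bijective]⟩
  obtain ⟨r, ⟨f⟩⟩ := IsFreeGroup.exists_mulEquiv_freeGroup_fin (H.map e.toMonoidHom)
  exact ⟨r, ⟨(e.subgroupMap H).trans f⟩⟩

section Exponent

variable {G A : Type*} [Group G] [CommGroup A] {k D : ℕ} [NeZero D] {v : Fin k → G}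

theorem MonoidHom.range_subset_range_prod_pow (hv : Subgroup.closure (Set.range v) = ⊤)
    (hA : ∀ a : A, a ^ D = 1) (f : G →* A) :
    (f.range : Set A) ⊆ Set.range fun c : Fin k → ZMod D => ∏ i, f (v i) ^ (c i).val := by
  rintro _ ⟨g, rfl⟩
  have hg : f g ∈ Subgroup.closure (Set.range (f ∘ v)) := by
    rw [Set.range_comp, ← MonoidHom.map_closure, hv]
    exact ⟨g, Subgroup.mem_top g, rfl⟩
  obtain ⟨a, ha⟩ := Subgroup.mem_closure_range_iff_of_fintype.1 hg
  refine ⟨fun i => a i, ha ▸ Finset.prod_congr rfl fun i _ => ?_⟩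
  rw [← zpow_natCast, ZMod.val_intCast, ← zpow_eq_zpow_emod' _ (hA _), Function.comp_apply]

theorem MonoidHom.finite_range (hv : Subgroup.closure (Set.range v) = ⊤)
    (hA : ∀ a : A, a ^ D = 1) (f : G →* A) : (f.range : Set A).Finite :=
  (Set.finite_range _).subset (f.range_subset_range_prod_pow hv hA)

theorem MonoidHom.index_ker_ne_zero_of_pow_eq_one (hv : Subgroup.closure (Set.range v) = ⊤)
    (hA : ∀ a : A, a ^ D = 1) (f : G →* A) : f.ker.index ≠ 0 := by
  have := (f.finite_range hv hA).to_subtype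
  rw [Subgroup.index_ker]
  exact Nat.card_ne_zero.2 ⟨inferInstance, this⟩

theorem MonoidHom.index_ker_le_pow (hv : Subgroup.closure (Set.range v) = ⊤)
    (hA : ∀ a : A, a ^ D = 1) (f : G →* A) : f.ker.index ≤ D ^ k := by
  rw [Subgroup.index_ker]
  calc Nat.card f.range
      ≤ Nat.card (Set.range fun c : Fin k → ZMod D => ∏ i, f (v i) ^ (c i).val) :=
        Nat.card_mono (Set.finite_range _) (f.range_subset_range_prod_pow hv hA)
    _ ≤ Nat.card (Fin k → ZMod D) := Finite.card_range_le _
    _ = D ^ k := by simp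

end Exponent

open Matrix

section Kgrp

variable {n m : ℕ} (Q : Matrix (Fin m) (Fin m) ℤ) (P : Matrix (Fin n) (Fin m) ℤ)

theorem eq_vecMul_add_iff (a w : Fin m → ℤ) : a = a ᵥ* Q + w ↔ a ᵥ* (1 - Q) = w := by
  rw [vecMul_sub, vecMul_one, sub_eq_iff_eq_add']

abbrev CokerOneSub := (Fin m → ℤ) ⧸ LinearMap.range (vecMulLinear (1 - Q))

def obstructionHom : FreeGroup (Fin n) →* Multiplicative (CokerOneSub Q) :=
  (AddMonoidHom.toMultiplicative ((Submodule.mkQ _).comp (vecMulLinear P)).toAddMonoidHom).comp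
    (freeAb n)

theorem obstructionHom_apply (u : FreeGroup (Fin n)) :
    obstructionHom Q P u = .ofAdd (Submodule.Quotient.mk (freeVec u ᵥ* P)) :=
  rfl

theorem pow_natAbs_det_eq_one (x : Multiplicative (CokerOneSub Q)) :
    x ^ (1 - Q).det.natAbs = 1 := by
  obtain ⟨y, hy⟩ := Submodule.Quotient.mk_surjective _ x.toAdd
  rw [pow_natAbs_eq_one, ← toAdd_eq_zero, toAdd_zpow, ← hy, ← Submodule.Quotient.mk_smul,
    Submodule.Quotient.mk_eq_zero]
  exact det_smul_mem_range_vecMulLinear _ y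

theorem mem_Kgrp_iff (φ : FreeGroup (Fin n) →* FreeGroup (Fin n)) (u : FreeGroup (Fin n)) :
    u ∈ Kgrp n m φ Q P ↔ φ u = u ∧ obstructionHom Q P u = 1 := by
  simp only [obstructionHom_apply, ofAdd_eq_one, Submodule.Quotient.mk_eq_zero,
    LinearMap.mem_range, vecMulLinear_apply, ← eq_vecMul_add_iff]
  rfl

theorem Kgrp_le_fixedSubgroup (φ : FreeGroup (Fin n) →* FreeGroup (Fin n)) :
    Kgrp n m φ Q P ≤ fixedSubgroup φ :=
  fun _ hu => hu.1

theorem Kgrp_subgroupOf_fixedSubgroup (φ : FreeGroup (Fin n) →* FreeGroup (Fin n)) :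
    (Kgrp n m φ Q P).subgroupOf (fixedSubgroup φ) =
      ((obstructionHom Q P).comp (fixedSubgroup φ).subtype).ker := by
  ext ⟨u, hu⟩
  simp only [Subgroup.mem_subgroupOf, mem_Kgrp_iff, MonoidHom.mem_ker]
  exact and_iff_right hu

end Kgrp

section FixedSubgroup

variable {n m : ℕ} {φ : FreeGroup (Fin n) →* FreeGroup (Fin n)}
  {Q : Matrix (Fin m) (Fin m) ℤ} {P : Matrix (Fin n) (Fin m) ℤ}
  {Ψ : (FreeGroup (Fin n) × ZPowFreeAb m) →* (FreeGroup (Fin n) × ZPowFreeAb m)}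

theorem mem_fixedSubgroup_iff_of_eq
    (hΨ : ∀ x : FreeGroup (Fin n) × ZPowFreeAb m,
      Ψ x = (φ x.1, Multiplicative.ofAdd (x.2.toAdd ᵥ* Q + freeVec x.1 ᵥ* P)))
    (x : FreeGroup (Fin n) × ZPowFreeAb m) :
    x ∈ fixedSubgroup Ψ ↔ φ x.1 = x.1 ∧ x.2.toAdd ᵥ* (1 - Q) = freeVec x.1 ᵥ* P := by
  change Ψ x = x ↔ _
  rw [hΨ, Prod.ext_iff, ← eq_vecMul_add_iff, eq_comm (a := x.2.toAdd)]
  exact and_congr_right' Multiplicative.ofAdd.eq_symm_apply.symm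

theorem nonempty_fixedSubgroup_mulEquiv_Kgrp (hdet : (1 - Q).det ≠ 0)
    (hΨ : ∀ x : FreeGroup (Fin n) × ZPowFreeAb m,
      Ψ x = (φ x.1, Multiplicative.ofAdd (x.2.toAdd ᵥ* Q + freeVec x.1 ᵥ* P))) :
    Nonempty (fixedSubgroup Ψ ≃* Kgrp n m φ Q P) := by
  have hinj : Function.Injective (1 - Q).vecMul := isRightRegular_iff_vecMul_injective.1 <|
    isRightRegular_iff_nonsingular.2 (nonsingular_iff_det_ne_zero.2 hdet)
  have hmem (x : fixedSubgroup Ψ) : x.1.1 ∈ Kgrp n m φ Q P :=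
    have ⟨hφ, ha⟩ := (mem_fixedSubgroup_iff_of_eq hΨ x).1 x.2
    ⟨hφ, x.1.2.toAdd, (eq_vecMul_add_iff Q _ _).2 ha⟩
  refine ⟨.ofBijective (((MonoidHom.fst _ _).comp (fixedSubgroup Ψ).subtype).codRestrict _ hmem)
    ⟨fun x y hxy => ?_, fun ⟨u, hφ, a, ha⟩ => ?_⟩⟩
  · have hu : x.1.1 = y.1.1 := congrArg Subtype.val hxy
    have hx := ((mem_fixedSubgroup_iff_of_eq hΨ x).1 x.2).2
    have hy := ((mem_fixedSubgroup_iff_of_eq hΨ y).1 y.2).2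
    rw [hu, ← hy] at hx
    exact Subtype.ext (Prod.ext hu (Multiplicative.toAdd.injective (hinj hx)))
  · refine ⟨⟨(u, .ofAdd a), (mem_fixedSubgroup_iff_of_eq hΨ _).2 ?_⟩, rfl⟩
    exact ⟨hφ, (eq_vecMul_add_iff Q _ _).1 ha⟩

end FixedSubgroup

theorem stmt8_general (n m : ℕ)
    (φ : FreeGroup (Fin n) →* FreeGroup (Fin n))
    (Q : Matrix (Fin m) (Fin m) ℤ) (P : Matrix (Fin n) (Fin m) ℤ)
    (Ψ : (FreeGroup (Fin n) × ZPowFreeAb m) →* (FreeGroup (Fin n) × ZPowFreeAb m))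
    (hΨ : ∀ x : FreeGroup (Fin n) × ZPowFreeAb m,
      Ψ x = (φ x.1, Multiplicative.ofAdd
        (Matrix.vecMul (Multiplicative.toAdd x.2) Q + Matrix.vecMul (freeVec x.1) P)))
    (d : ℤ) (hd : d = (1 - Q).det) (hd0 : d ≠ 0)
    (k : ℕ) (hk : Nonempty (fixedSubgroup φ ≃* FreeGroup (Fin k))) :
    ((Kgrp n m φ Q P).subgroupOf (fixedSubgroup φ)).index ≠ 0 ∧
    ((Kgrp n m φ Q P).subgroupOf (fixedSubgroup φ)).index ≤ d.natAbs ^ k ∧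
    Nonempty (fixedSubgroup Ψ ≃* Kgrp n m φ Q P) ∧
    ∃ r : ℕ, Nonempty (Kgrp n m φ Q P ≃* FreeGroup (Fin r)) := by
  obtain ⟨e⟩ := hk
  subst hd
  have : NeZero (1 - Q).det.natAbs := ⟨Int.natAbs_ne_zero.2 hd0⟩
  have hgen : Subgroup.closure (Set.range (e.symm ∘ FreeGroup.of)) = ⊤ := by
    rw [Set.range_comp, ← MulEquiv.coe_toMonoidHom, ← MonoidHom.map_closure,
      FreeGroup.closure_range_of, Subgroup.map_top_of_surjective _ e.symm.surjective]
  have hindex : ((Kgrp n m φ Q P).subgroupOf (fixedSubgroup φ)).index ≠ 0 := by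
    rw [Kgrp_subgroupOf_fixedSubgroup]
    exact MonoidHom.index_ker_ne_zero_of_pow_eq_one hgen (pow_natAbs_det_eq_one Q) _
  obtain ⟨r, ⟨f⟩⟩ := Subgroup.exists_mulEquiv_freeGroup_fin_of_index_ne_zero e hindex
  refine ⟨hindex, ?_, nonempty_fixedSubgroup_mulEquiv_Kgrp hd0 hΨ,
    r, ⟨(Subgroup.subgroupOfEquivOfLe (Kgrp_le_fixedSubgroup Q P φ)).symm.trans f⟩⟩
  rw [Kgrp_subgroupOf_fixedSubgroup]
  exact MonoidHom.index_ker_le_pow hgen (pow_natAbs_det_eq_one Q) _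

theorem stmt8 (n m : ℕ) (hn : 2 ≤ n) (hm : 1 ≤ m)
    (φ : FreeGroup (Fin n) →* FreeGroup (Fin n))
    (Q : Matrix (Fin m) (Fin m) ℤ) (P : Matrix (Fin n) (Fin m) ℤ)
    (Ψ : (FreeGroup (Fin n) × ZPowFreeAb m) →* (FreeGroup (Fin n) × ZPowFreeAb m))
    (hΨ : ∀ x : FreeGroup (Fin n) × ZPowFreeAb m,
      Ψ x = (φ x.1, Multiplicative.ofAdd
        (Matrix.vecMul (Multiplicative.toAdd x.2) Q + Matrix.vecMul (freeVec x.1) P)))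
    (d : ℤ) (hd : d = (1 - Q).det) (hd0 : d ≠ 0)
    (k : ℕ) (hk : Nonempty (fixedSubgroup φ ≃* FreeGroup (Fin k))) :
    ((Kgrp n m φ Q P).subgroupOf (fixedSubgroup φ)).index ≠ 0 ∧
    ((Kgrp n m φ Q P).subgroupOf (fixedSubgroup φ)).index ≤ d.natAbs ^ k ∧
    Nonempty (fixedSubgroup Ψ ≃* Kgrp n m φ Q P) ∧
    ∃ r : ℕ, Nonempty (Kgrp n m φ Q P ≃* FreeGroup (Fin r)) :=
  stmt8_general n m φ Q P Ψ hΨ d hd hd0 k hk
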